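/- For every binary vector x ∈ {0,1}^n, the follower's optimal value satisfies max_{y ∈ I_Y(x)} β^T y = Σ_{k=1}^{k_f} min_{j ∈ {0,…,n}} ( β_j f_k + Σ_{i ∈ F_k, i > j} (β_i − β_j)(1 − x_i) ). -/

import Mathlib

/-- The follower's optimal value: the maximum of `βᵀy` over binary `y ≤ 1 - x`
satisfying the follower's capacity constraints `∑_{i ∈ F_k} y_i ≤ f_k`. -/
noncomputable def followerVal (n kf : ℕ) (F : Fin kf → Finset ℕ) (f : Fin kf → ℕ)
    (β : ℕ → ℝ) (x : ℕ → ℝ) : ℝ :=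
  sSup {v : ℝ | ∃ y : ℕ → ℝ,
    (∀ i, y i = 0 ∨ y i = 1) ∧
    (∀ i, y i ≤ 1 - x i) ∧
    (∀ k : Fin kf, ∑ i ∈ F k, y i ≤ (f k : ℝ)) ∧
    v = ∑ i ∈ Finset.Icc 1 n, β i * y i}

/-- The dual value for one follower group:
`min_{j ∈ {0,…,n}} ( β_j f + ∑_{i ∈ F, i > j} (β_i - β_j)(1 - x_i) )`. -/
noncomputable def dualVal (n : ℕ) (F : Finset ℕ) (f : ℕ) (β : ℕ → ℝ) (x : ℕ → ℝ) : ℝ :=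
  Finset.inf' (Finset.range (n + 1)) Finset.nonempty_range_add_one
    (fun j => β j * (f : ℝ) + ∑ i ∈ F.filter (fun i => j < i), (β i - β j) * (1 - x i))

/-!
The problem decomposes over the groups `F_k`. Within a group, every threshold `j` gives an
upper bound (weak duality), from `β_i y_i ≤ β_j y_i + (β_i - β_j)⁺ (1 - x_i)` and `β_j ≥ 0`.
Taking `j` minimal such that at most `f` available items lie above `j`, the follower packs
exactly those items: either there are exactly `f` of them, or `j = 0` and `β_j = 0`; in both
cases the term `β_j (f - #{available i > j})` vanishes and the bound is attained.
-/

open Finset Function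

section Partition

variable {ι α M : Type*} [Fintype ι] [DecidableEq α] [AddCommMonoid M]

lemma sum_eq_sum_sum_of_partition {s : Finset α} {F : ι → Finset α}
    (hsub : ∀ k, F k ⊆ s) (hdisj : Pairwise (Disjoint on F))
    (hcover : ∀ i ∈ s, ∃ k, i ∈ F k) (g : α → M) :
    ∑ i ∈ s, g i = ∑ k, ∑ i ∈ F k, g i := by
  have hs : s = univ.biUnion F := by
    ext i
    simp only [mem_biUnion, mem_univ, true_and]
    exact ⟨hcover i, fun ⟨k, hk⟩ => hsub k hk⟩
  rw [hs, sum_biUnion (hdisj.set_pairwise _)]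

lemma inter_biUnion_eq_of_subset {F S : ι → Finset α} (hdisj : Pairwise (Disjoint on F))
    (hS : ∀ k, S k ⊆ F k) (k : ι) : F k ∩ univ.biUnion S = S k := by
  ext i
  simp only [mem_inter, mem_biUnion, mem_univ, true_and]
  refine ⟨fun ⟨hiF, k', hiS⟩ => ?_, fun hiS => ⟨hS k hiS, k, hiS⟩⟩
  obtain rfl | hne := eq_or_ne k' k
  · exact hiS
  · exact absurd hiF (disjoint_left.mp (hdisj hne) (hS k' hiS))

end Partition

lemma card_filter_lt_le_card_filter_succ_lt (A : Finset ℕ) (m : ℕ) :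
    #{i ∈ A | m < i} ≤ #{i ∈ A | m + 1 < i} + 1 :=
  calc #{i ∈ A | m < i} ≤ #(insert (m + 1) {i ∈ A | m + 1 < i}) :=
        card_le_card fun i => by simp only [mem_filter, mem_insert]; grind
    _ ≤ _ := card_insert_le _ _

lemma exists_threshold_card_filter_lt {n : ℕ} (A : Finset ℕ) (hA : ∀ i ∈ A, i ≤ n) (f : ℕ) :
    ∃ j ≤ n, #{i ∈ A | j < i} ≤ f ∧ (j = 0 ∨ #{i ∈ A | j < i} = f) := by
  have hn : #{i ∈ A | n < i} ≤ f := by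
    rw [filter_false_of_mem fun i hi => not_lt.mpr (hA i hi)]
    simp
  have hex : ∃ j, #{i ∈ A | j < i} ≤ f := ⟨n, hn⟩
  refine ⟨Nat.find hex, Nat.find_min' hex hn, Nat.find_spec hex, ?_⟩
  · rcases h : Nat.find hex with _ | m
    · exact Or.inl rfl
    · have hm := Nat.find_min hex (show m < Nat.find hex by omega)
      have hj := h ▸ Nat.find_spec hex
      have := card_filter_lt_le_card_filter_succ_lt A m
      omega

section OneGroup

variable {n : ℕ} {β : ℕ → ℝ} {F : Finset ℕ} {f : ℕ} {x : ℕ → ℝ}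

lemma sum_mul_le_dualVal (hβ0 : β 0 = 0) (hβmono : ∀ i j : ℕ, i ≤ j → j ≤ n → β i ≤ β j)
    (hF : ∀ i ∈ F, i ≤ n) {y : ℕ → ℝ} (hy0 : ∀ i, 0 ≤ y i) (hyx : ∀ i, y i ≤ 1 - x i)
    (hyf : ∑ i ∈ F, y i ≤ f) : ∑ i ∈ F, β i * y i ≤ dualVal n F f β x := by
  refine le_inf' _ _ fun j hj => ?_
  have hjn : j ≤ n := Nat.lt_succ_iff.mp (mem_range.mp hj)
  have hβj : 0 ≤ β j := hβ0 ▸ hβmono 0 j j.zero_le hjn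
  have hpoint : ∀ i ∈ F,
      β i * y i ≤ β j * y i + if j < i then (β i - β j) * (1 - x i) else 0 := by
    intro i hi
    split_ifs with hji
    · nlinarith [hβmono j i hji.le (hF i hi), hy0 i, hyx i]
    · nlinarith [hβmono i j (not_lt.mp hji) hjn, hy0 i]
  calc ∑ i ∈ F, β i * y i
      ≤ ∑ i ∈ F, (β j * y i + if j < i then (β i - β j) * (1 - x i) else 0) :=
        sum_le_sum hpoint
    _ = β j * ∑ i ∈ F, y i + ∑ i ∈ F with j < i, (β i - β j) * (1 - x i) := by
        rw [sum_add_distrib, ← mul_sum, sum_filter]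
    _ ≤ β j * f + ∑ i ∈ F with j < i, (β i - β j) * (1 - x i) := by
        have := mul_le_mul_of_nonneg_left hyf hβj
        linarith

lemma sum_filter_lt_mul_one_sub (hx : ∀ i, x i = 0 ∨ x i = 1) (g : ℕ → ℝ) (j : ℕ) :
    ∑ i ∈ F with j < i, g i * (1 - x i) = ∑ i ∈ {i ∈ F | x i = 0} with j < i, g i := by
  rw [filter_comm, sum_filter (fun i => x i = 0)]
  refine sum_congr rfl fun i _ => ?_
  rcases hx i with h | h <;> simp [h]

lemma exists_subset_card_le_dualVal_le (hβ0 : β 0 = 0) (hF : ∀ i ∈ F, i ≤ n)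
    (hx : ∀ i, x i = 0 ∨ x i = 1) :
    ∃ S ⊆ {i ∈ F | x i = 0}, #S ≤ f ∧ dualVal n F f β x ≤ ∑ i ∈ S, β i := by
  obtain ⟨j, hjn, hcard, htight⟩ :=
    exists_threshold_card_filter_lt {i ∈ F | x i = 0} (fun i hi => hF i (mem_filter.1 hi).1) f
  set S := {i ∈ {i ∈ F | x i = 0} | j < i}
  refine ⟨S, filter_subset _ _, hcard, ?_⟩
  have hslack : β j * (f - #S) = 0 := by
    rcases htight with rfl | h
    · simp [hβ0]
    · simp [h]
  calc dualVal n F f β x ≤ β j * f + ∑ i ∈ F with j < i, (β i - β j) * (1 - x i) :=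
        inf'_le _ (mem_range.2 (Nat.lt_succ_of_le hjn))
    _ = ∑ i ∈ S, β i + β j * (f - #S) := by
        rw [sum_filter_lt_mul_one_sub hx, sum_sub_distrib, sum_const, nsmul_eq_mul]
        ring
    _ = ∑ i ∈ S, β i := by rw [hslack, add_zero]

end OneGroup

section AllGroups

variable {ι : Type*} [Fintype ι] {n : ℕ} {β : ℕ → ℝ} {F : ι → Finset ℕ} {f : ι → ℕ}
  {x : ℕ → ℝ}

lemma sum_mul_le_sum_dualVal (hβ0 : β 0 = 0)
    (hβmono : ∀ i j : ℕ, i ≤ j → j ≤ n → β i ≤ β j) (hFsub : ∀ k, F k ⊆ Icc 1 n)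
    (hFdisj : Pairwise (Disjoint on F)) (hFcover : ∀ i ∈ Icc 1 n, ∃ k, i ∈ F k)
    {y : ℕ → ℝ} (hy0 : ∀ i, 0 ≤ y i) (hyx : ∀ i, y i ≤ 1 - x i)
    (hyf : ∀ k, ∑ i ∈ F k, y i ≤ f k) :
    ∑ i ∈ Icc 1 n, β i * y i ≤ ∑ k, dualVal n (F k) (f k) β x := by
  rw [sum_eq_sum_sum_of_partition hFsub hFdisj hFcover]
  exact sum_le_sum fun k _ =>
    sum_mul_le_dualVal hβ0 hβmono (fun i hi => (mem_Icc.1 (hFsub k hi)).2) hy0 hyx (hyf k)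

lemma exists_feasible_sum_dualVal_le (hβ0 : β 0 = 0) (hFsub : ∀ k, F k ⊆ Icc 1 n)
    (hFdisj : Pairwise (Disjoint on F)) (hFcover : ∀ i ∈ Icc 1 n, ∃ k, i ∈ F k)
    (hx : ∀ i, x i = 0 ∨ x i = 1) :
    ∃ y : ℕ → ℝ, (∀ i, y i = 0 ∨ y i = 1) ∧ (∀ i, y i ≤ 1 - x i) ∧
      (∀ k, ∑ i ∈ F k, y i ≤ f k) ∧
      ∑ k, dualVal n (F k) (f k) β x ≤ ∑ i ∈ Icc 1 n, β i * y i := by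
  choose S hSA hScard hSval using fun k =>
    exists_subset_card_le_dualVal_le (f := f k) hβ0 (fun i hi => (mem_Icc.1 (hFsub k hi)).2) hx
  have hFS := inter_biUnion_eq_of_subset hFdisj fun k => (hSA k).trans (filter_subset _ _)
  refine ⟨fun i => if i ∈ univ.biUnion S then 1 else 0, fun i => ?_, fun i => ?_, fun k => ?_, ?_⟩
  · dsimp only
    split_ifs <;> simp
  · dsimp only
    split_ifs with hi
    · obtain ⟨k, -, hik⟩ := mem_biUnion.1 hi
      simp [(mem_filter.1 (hSA k hik)).2]
    · rcases hx i with h | h <;> simp [h]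
  · simp only [sum_ite_mem, hFS, sum_const, nsmul_eq_mul, mul_one]
    exact_mod_cast hScard k
  · rw [sum_eq_sum_sum_of_partition hFsub hFdisj hFcover]
    refine sum_le_sum fun k _ => ?_
    simpa only [mul_ite, mul_one, mul_zero, sum_ite_mem, hFS] using hSval k

end AllGroups

/-- for every binary `x`, the follower's optimal value equals the sum,
over the follower's groups, of the dual minima. -/
theorem follower_dual_value (n kf : ℕ) (β : ℕ → ℝ)
    (hβ0 : β 0 = 0)
    (hβmono : ∀ i j : ℕ, i ≤ j → j ≤ n → β i ≤ β j)
    (F : Fin kf → Finset ℕ) (f : Fin kf → ℕ)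
    (hFsub : ∀ k, F k ⊆ Finset.Icc 1 n)
    (hFdisj : ∀ k k', k ≠ k' → Disjoint (F k) (F k'))
    (hFcover : ∀ i ∈ Finset.Icc 1 n, ∃ k, i ∈ F k)
    (x : ℕ → ℝ) (hx : ∀ i, x i = 0 ∨ x i = 1) :
    followerVal n kf F f β x = ∑ k : Fin kf, dualVal n (F k) (f k) β x := by
  have hdisj : Pairwise (Disjoint on F) := fun k k' => hFdisj k k'
  have hweak : ∀ y : ℕ → ℝ, (∀ i, y i = 0 ∨ y i = 1) → (∀ i, y i ≤ 1 - x i) →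
      (∀ k, ∑ i ∈ F k, y i ≤ f k) →
      ∑ i ∈ Icc 1 n, β i * y i ≤ ∑ k, dualVal n (F k) (f k) β x :=
    fun y hy01 hyx hyf => sum_mul_le_sum_dualVal hβ0 hβmono hFsub hdisj hFcover
      (fun i => (hy01 i).elim (fun h => h.ge) (fun h => h ▸ zero_le_one)) hyx hyf
  obtain ⟨y, hy01, hyx, hyf, hyval⟩ :=
    exists_feasible_sum_dualVal_le (f := f) (β := β) hβ0 hFsub hdisj hFcover hx
  refine IsGreatest.csSup_eq ⟨⟨y, hy01, hyx, hyf, le_antisymm hyval (hweak y hy01 hyx hyf)⟩, ?_⟩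
  rintro v ⟨z, hz01, hzx, hzf, rfl⟩
  exact hweak z hz01 hzx hzf
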